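/- The dynamic programming algorithm for MAX-LINREV with grid step 1/c, c = ⌈n/δ⌉, returns a value max_{a∈A}{M(1,a)+a} that is at least OPT − δ, where OPT = max_{ξ ∈ Ξ^q, p ∈ 𝒫^b} [ Rev(p, ξ) + ∑_{i=1}^n w_{i,ξ_i,p_i} ], with Rev(p,ξ) = Rev_{≥1}(p,ξ) defined by the backward recursion Rev_{≥i} = z_i p_i + (1−z_i)Rev_{≥i+1}, Rev_{≥n+1} = 0. -/
import Mathlib


open Finset

/-- The dynamic-programming table of the MAX-LINREV algorithm (maximum over an empty
feasible set being 0). -/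
noncomputable def DP {X P : Type} [Fintype X] [Fintype P]
    (w z : ℕ → X → P → ℝ) (pr : P → ℝ) (A : Finset ℝ) : ℕ → ℕ → ℝ → ℝ
  | 0, _, _ => 0
  | 1, i, a =>
      (Finset.univ.filter (fun xp : X × P => a ≤ w i xp.1 xp.2)).fold max 0
        (fun xp => z i xp.1 xp.2 * pr xp.2)
  | (m + 2), i, a =>
      ((((Finset.univ : Finset (X × P)) ×ˢ A)).filter
          (fun yy : (X × P) × ℝ => a ≤ w i yy.1.1 yy.1.2 + yy.2)).fold max 0
        (fun yy => z i yy.1.1 yy.1.2 * pr yy.1.2 +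
          (1 - z i yy.1.1 yy.1.2) * DP w z pr A (m + 1) (i + 1) yy.2)

/-- `Rev_{≥i}(p, ξ)` over the `m` buyers `i, ..., i+m−1`. -/
def RevGe {X P : Type} (z : ℕ → X → P → ℝ) (pr : P → ℝ)
    (ξ : ℕ → X) (p : ℕ → P) : ℕ → ℕ → ℝ
  | 0, _ => 0
  | m + 1, i =>
      z i (ξ i) (p i) * pr (p i) + (1 - z i (ξ i) (p i)) * RevGe z pr ξ p m (i + 1)

lemma dp_key {X P : Type} [Fintype X] [Fintype P]
    (w z : ℕ → X → P → ℝ) (pr : P → ℝ) (n c : ℕ) (hc : 0 < c)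
    (hw : ∀ i x p, w i x p ∈ Set.Icc (0 : ℝ) 1)
    (hz : ∀ i x p, z i x p ∈ Set.Icc (0 : ℝ) 1)
    (A : Finset ℝ)
    (hA : A = (Finset.range (n * c + 1)).image (fun j : ℕ => (j : ℝ) / c))
    (ξ : ℕ → X) (p : ℕ → P) :
    ∀ m i, m + 1 ≤ n →
      RevGe z pr ξ p (m + 1) i ≤
        DP w z pr A (m + 1) i
          ((∑ t ∈ Finset.range (m + 1), ⌊(c : ℝ) * w (i + t) (ξ (i + t)) (p (i + t))⌋₊ : ℕ) / (c : ℝ)) := by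
  have hcR : (0 : ℝ) < c := by exact_mod_cast hc
  have hfl : ∀ j, (⌊(c : ℝ) * w j (ξ j) (p j)⌋₊ : ℝ) / c ≤ w j (ξ j) (p j) := by
    intro j
    rw [div_le_iff₀ hcR]
    have h0 : (0 : ℝ) ≤ (c : ℝ) * w j (ξ j) (p j) :=
      mul_nonneg hcR.le (hw j _ _).1
    calc (⌊(c : ℝ) * w j (ξ j) (p j)⌋₊ : ℝ) ≤ (c : ℝ) * w j (ξ j) (p j) := Nat.floor_le h0
      _ = w j (ξ j) (p j) * c := mul_comm _ _
  have hKle : ∀ m i, (∑ t ∈ Finset.range m, ⌊(c : ℝ) * w (i + t) (ξ (i + t)) (p (i + t))⌋₊) ≤ m * c := by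
    intro m i
    calc (∑ t ∈ Finset.range m, ⌊(c : ℝ) * w (i + t) (ξ (i + t)) (p (i + t))⌋₊)
        ≤ ∑ t ∈ Finset.range m, c := by
          refine Finset.sum_le_sum fun t _ => ?_
          have : (c : ℝ) * w (i + t) (ξ (i + t)) (p (i + t)) ≤ ((c : ℕ) : ℝ) := by
            nlinarith [(hw (i + t) (ξ (i + t)) (p (i + t))).2, hcR]
          simpa using Nat.floor_le_floor this
      _ = m * c := by simp [mul_comm]
  intro m
  induction m with
  | zero =>
      intro i _
      rw [RevGe, RevGe, DP]
      have hmem : (ξ i, p i) ∈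
          (Finset.univ.filter (fun xp : X × P =>
            ((∑ t ∈ Finset.range 1, ⌊(c : ℝ) * w (i + t) (ξ (i + t)) (p (i + t))⌋₊ : ℕ) : ℝ) / c ≤ w i xp.1 xp.2)) := by
        simp only [Finset.mem_filter, Finset.mem_univ, true_and, Finset.sum_range_one,
          Nat.add_zero]
        simpa using hfl i
      have hb : z i (ξ i) (p i) * pr (p i) ≤
          (Finset.univ.filter (fun xp : X × P =>
            ((∑ t ∈ Finset.range 1, ⌊(c : ℝ) * w (i + t) (ξ (i + t)) (p (i + t))⌋₊ : ℕ) : ℝ) / c ≤ w i xp.1 xp.2)).fold max 0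
            (fun xp : X × P => z i xp.1 xp.2 * pr xp.2) :=
        (Finset.le_fold_max _).mpr (Or.inr ⟨(ξ i, p i), hmem, le_refl _⟩)
      simpa using hb
  | succ m ih =>
      intro i hmn
      have ih' := ih (i + 1) (by omega)
      set K' : ℕ := ∑ t ∈ Finset.range (m + 1), ⌊(c : ℝ) * w (i + 1 + t) (ξ (i + 1 + t)) (p (i + 1 + t))⌋₊ with hK'
      have hsplit : (∑ t ∈ Finset.range (m + 2), ⌊(c : ℝ) * w (i + t) (ξ (i + t)) (p (i + t))⌋₊)
          = ⌊(c : ℝ) * w i (ξ i) (p i)⌋₊ + K' := by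
        rw [Finset.sum_range_succ']
        have e1 : ∀ t : ℕ, ⌊(c : ℝ) * w (i + (t + 1)) (ξ (i + (t + 1))) (p (i + (t + 1)))⌋₊
            = ⌊(c : ℝ) * w (i + 1 + t) (ξ (i + 1 + t)) (p (i + 1 + t))⌋₊ := by
          intro t; rw [show i + (t + 1) = i + 1 + t from by omega]
        rw [Finset.sum_congr rfl (fun t _ => e1 t), ← hK', Nat.add_zero]
        omega
      have hK'A : ((K' : ℝ) / c) ∈ A := by
        rw [hA]
        exact Finset.mem_image.mpr ⟨K', Finset.mem_range.mpr (by
          have h3 : K' ≤ n * c :=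
            le_trans (hKle (m + 1) (i + 1)) (Nat.mul_le_mul_right c (by omega))
          omega), rfl⟩
      rw [RevGe, DP]
      have hmem : ((ξ i, p i), (K' : ℝ) / c) ∈
          ((((Finset.univ : Finset (X × P)) ×ˢ A)).filter
            (fun yy : (X × P) × ℝ =>
              ((∑ t ∈ Finset.range (m + 2), ⌊(c : ℝ) * w (i + t) (ξ (i + t)) (p (i + t))⌋₊ : ℕ) : ℝ) / c
                ≤ w i yy.1.1 yy.1.2 + yy.2)) := by
        refine Finset.mem_filter.mpr ⟨Finset.mem_product.mpr ⟨Finset.mem_univ _, hK'A⟩, ?_⟩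
        rw [hsplit]
        push_cast
        rw [add_div]
        exact add_le_add (hfl i) le_rfl
      refine le_trans ?_ ((Finset.le_fold_max _).mpr (Or.inr ⟨_, hmem, le_refl _⟩))
      have hz1 : 0 ≤ 1 - z i (ξ i) (p i) := by
        have := (hz i (ξ i) (p i)).2; linarith
      exact add_le_add le_rfl (mul_le_mul_of_nonneg_left ih' hz1)

/-- With grid step 1/c, c = ⌈n/δ⌉, the value max_{a∈A}{M(1,a)+a}
returned by the dynamic programming algorithm for MAX-LINREV is at least OPT − δ,
where OPT = max_{ξ,p} [Rev(p,ξ) + ∑_i w_{i,ξ_i,p_i}]. -/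
theorem dp_max_linrev_approx (n : ℕ) (δ : ℝ) (hδ : 0 < δ) (hn : 1 ≤ n)
    (c : ℕ) (hc : c = ⌈(n : ℝ) / δ⌉₊)
    (X P : Type) [Fintype X] [Fintype P]
    (w z : ℕ → X → P → ℝ) (pr : P → ℝ)
    (hw : ∀ i x p, w i x p ∈ Set.Icc (0 : ℝ) 1)
    (hz : ∀ i x p, z i x p ∈ Set.Icc (0 : ℝ) 1)
    (hpr : ∀ p, pr p ∈ Set.Icc (0 : ℝ) 1)
    (A : Finset ℝ)
    (hA : A = (Finset.range (n * c + 1)).image (fun j : ℕ => (j : ℝ) / c)) :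
    ∀ (ξ : ℕ → X) (p : ℕ → P),
      A.fold max 0 (fun a => DP w z pr A n 0 a + a) ≥
        RevGe z pr ξ p n 0 + (∑ i ∈ Finset.range n, w i (ξ i) (p i)) - δ := by
  intro ξ p
  have hc0 : 0 < c := by
    rw [hc]
    refine Nat.ceil_pos.mpr (div_pos ?_ hδ)
    exact_mod_cast Nat.lt_of_lt_of_le Nat.zero_lt_one hn
  have hcR : (0 : ℝ) < c := by exact_mod_cast hc0
  obtain ⟨m, rfl⟩ : ∃ m, n = m + 1 := ⟨n - 1, by omega⟩
  set K : ℕ := ∑ t ∈ Finset.range (m + 1), ⌊(c : ℝ) * w (0 + t) (ξ (0 + t)) (p (0 + t))⌋₊ with hK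
  have hkey := dp_key w z pr (m + 1) c hc0 hw hz A hA ξ p m 0 le_rfl
  have hKle : K ≤ (m + 1) * c := by
    rw [hK]
    calc (∑ t ∈ Finset.range (m + 1), ⌊(c : ℝ) * w (0 + t) (ξ (0 + t)) (p (0 + t))⌋₊)
        ≤ ∑ t ∈ Finset.range (m + 1), c := by
          refine Finset.sum_le_sum fun t _ => ?_
          have h : (c : ℝ) * w (0 + t) (ξ (0 + t)) (p (0 + t)) ≤ ((c : ℕ) : ℝ) := by
            nlinarith [(hw (0 + t) (ξ (0 + t)) (p (0 + t))).2, hcR]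
          simpa using Nat.floor_le_floor h
      _ = (m + 1) * c := by simp [mul_comm]
  have hKA : ((K : ℝ) / c) ∈ A := by
    rw [hA]
    exact Finset.mem_image.mpr ⟨K, Finset.mem_range.mpr (by omega), rfl⟩
  have hfold : DP w z pr A (m + 1) 0 ((K : ℝ) / c) + (K : ℝ) / c ≤
      A.fold max 0 (fun a => DP w z pr A (m + 1) 0 a + a) :=
    (Finset.le_fold_max _).mpr (Or.inr ⟨_, hKA, le_refl _⟩)
  set S : ℝ := ∑ i ∈ Finset.range (m + 1), w i (ξ i) (p i) with hS
  have hKc : (c : ℝ) * S - (m + 1) ≤ (K : ℝ) := by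
    have h1 : ∀ i ∈ Finset.range (m + 1),
        (c : ℝ) * w i (ξ i) (p i) - 1 ≤ (⌊(c : ℝ) * w i (ξ i) (p i)⌋₊ : ℝ) :=
      fun i _ => (Nat.sub_one_lt_floor _).le
    have h2 : (c : ℝ) * S - (m + 1) =
        ∑ i ∈ Finset.range (m + 1), ((c : ℝ) * w i (ξ i) (p i) - 1) := by
      rw [Finset.sum_sub_distrib, ← Finset.mul_sum, hS]
      simp
    rw [h2, hK]
    push_cast
    simp only [zero_add]
    exact Finset.sum_le_sum h1
  have hmc : ((m : ℝ) + 1) ≤ (c : ℝ) * δ := by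
    have h3 : ((m + 1 : ℕ) : ℝ) / δ ≤ (c : ℝ) := by
      rw [hc]; exact_mod_cast Nat.le_ceil _
    rw [div_le_iff₀ hδ] at h3
    push_cast at h3
    linarith
  have hlow : S - δ ≤ (K : ℝ) / c := by
    rw [le_div_iff₀ hcR]
    nlinarith
  calc RevGe z pr ξ p (m + 1) 0 + S - δ
      ≤ DP w z pr A (m + 1) 0 ((K : ℝ) / c) + (K : ℝ) / c := by linarith
    _ ≤ _ := hfold
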